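/- Every finite tree admits a ρ-decomposition with l = 3: a partition of its vertex set into layers V_1, …, V_L such that (i) every vertex in V_i has at most two neighbors in ⋃_{j ≥ i} V_j, and (ii) the subgraph induced by each layer consists of isolated vertices and paths, obtained by iteratively placing into the current layer all vertices of degree 1 and all vertices lying on induced paths of length at least 3 in the remaining graph; moreover this process terminates (L is finite) because each iteration removes at least a 1/16 fraction of the remaining vertices. -/

import Mathlib

/-!
Peel a forest by deleting, round after round, every vertex with at most two neighbours among
the remaining vertices: this removes every leaf and every vertex of a maximal degree-2 path,
whatever its length, and a vertex's layer is the round in which it is deleted. The subforest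
induced on `s` has at most `#s` edges, so its degree sum is at most `2 * #s` and at most `2/3` of
its vertices have degree `≥ 3`. Hence `k` rounds leave at most `(2/3)^k * n` vertices, and since
`log (3/2) ≥ 1/3` nothing is left after `⌊3 log n⌋ + 1` rounds.
-/

open Finset Real

theorem le_three_mul_log_of_three_pow_le {k n : ℕ} (h : 3 ^ k ≤ 2 ^ k * n) :
    (k : ℝ) ≤ 3 * log n := by
  have hpow : ((3 : ℝ) / 2) ^ k ≤ n := by
    rw [div_pow, div_le_iff₀ (by positivity), mul_comm]
    exact_mod_cast h
  have hlog : k * log (3 / 2) ≤ log n := by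
    rw [← Real.log_pow]
    exact log_le_log (by positivity) hpow
  have hlog32 : 1 / 3 ≤ log (3 / 2 : ℝ) := by
    have := one_sub_inv_le_log_of_pos (x := 3 / 2) (by norm_num)
    norm_num at this ⊢
    linarith
  nlinarith [(Nat.cast_nonneg k : (0 : ℝ) ≤ k)]

namespace SimpleGraph

variable {V : Type*} [Fintype V] {G : SimpleGraph V} [DecidableRel G.Adj]

theorem IsAcyclic.card_edgeFinset_le (hG : G.IsAcyclic) : #G.edgeFinset ≤ Fintype.card V := by
  classical
  cases isEmpty_or_nonempty V
  · simp [Subsingleton.elim G ⊥]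
  obtain ⟨T, hGT, -, hT⟩ := connected_top.exists_isTree_le_of_le_of_isAcyclic le_top hG
  have := hT.card_edgeFinset
  have := card_le_card (edgeFinset_mono hGT)
  omega

variable [DecidableEq V]

theorem IsAcyclic.sum_card_neighborFinset_inter_le (hG : G.IsAcyclic) (s : Finset V) :
    ∑ v ∈ s, #(G.neighborFinset v ∩ s) ≤ 2 * #s := by
  let H := G.induce (s : Set V)
  have hdeg (v : (s : Set V)) : H.degree v = #(G.neighborFinset v ∩ s) := by
    rw [← card_neighborFinset_eq_degree, ← card_map (.subtype _)]
    congr 1; ext u; simp [H, and_comm]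
  calc ∑ v ∈ s, #(G.neighborFinset v ∩ s) = ∑ v : (s : Set V), H.degree v := by
        simp only [hdeg]; exact (sum_coe_sort s _).symm
    _ = 2 * #H.edgeFinset := H.sum_degrees_eq_twice_card_edges
    _ ≤ 2 * #s := Nat.mul_le_mul_left 2 ((hG.induce _).card_edgeFinset_le.trans_eq (by simp))

variable (G) in
def peel : ℕ → Finset V
  | 0 => univ
  | k + 1 => {v ∈ peel k | 3 ≤ #(G.neighborFinset v ∩ peel k)}

theorem peel_succ_subset (k : ℕ) : G.peel (k + 1) ⊆ G.peel k := filter_subset _ _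

theorem peel_antitone : Antitone G.peel := antitone_nat_of_succ_le peel_succ_subset

theorem card_neighborFinset_inter_peel_le {v : V} {k : ℕ} (hv : v ∈ G.peel k)
    (hv' : v ∉ G.peel (k + 1)) : #(G.neighborFinset v ∩ G.peel k) ≤ 2 := by
  by_contra h
  exact hv' (mem_filter.mpr ⟨hv, by omega⟩)

theorem IsAcyclic.three_mul_card_peel_succ_le (hG : G.IsAcyclic) (k : ℕ) :
    3 * #(G.peel (k + 1)) ≤ 2 * #(G.peel k) :=
  calc 3 * #(G.peel (k + 1))
      = ∑ _v ∈ G.peel (k + 1), 3 := by rw [sum_const, smul_eq_mul, mul_comm]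
    _ ≤ ∑ v ∈ G.peel (k + 1), #(G.neighborFinset v ∩ G.peel k) :=
        sum_le_sum fun _ hv => (mem_filter.mp hv).2
    _ ≤ ∑ v ∈ G.peel k, #(G.neighborFinset v ∩ G.peel k) :=
        sum_le_sum_of_subset (peel_succ_subset k)
    _ ≤ 2 * #(G.peel k) := hG.sum_card_neighborFinset_inter_le _

theorem IsAcyclic.three_pow_mul_card_peel_le (hG : G.IsAcyclic) (k : ℕ) :
    3 ^ k * #(G.peel k) ≤ 2 ^ k * Fintype.card V := by
  induction k with
  | zero => simp [peel]
  | succ k ih =>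
    calc 3 ^ (k + 1) * #(G.peel (k + 1)) = 3 ^ k * (3 * #(G.peel (k + 1))) := by ring
      _ ≤ 3 ^ k * (2 * #(G.peel k)) := by grw [hG.three_mul_card_peel_succ_le k]
      _ = 2 * (3 ^ k * #(G.peel k)) := by ring
      _ ≤ 2 * (2 ^ k * Fintype.card V) := by grw [ih]
      _ = 2 ^ (k + 1) * Fintype.card V := by ring

theorem IsAcyclic.exists_peel_eq_empty (hG : G.IsAcyclic) :
    ∃ L : ℕ, G.peel L = ∅ ∧ (L : ℝ) ≤ 3 * log (Fintype.card V) + 1 := by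
  have hlog : 0 ≤ 3 * log (Fintype.card V) := by positivity
  refine ⟨⌊3 * log (Fintype.card V)⌋₊ + 1, ?_, by push_cast; grw [Nat.floor_le hlog]⟩
  by_contra hne
  have hcard : 1 ≤ #(G.peel (⌊3 * log (Fintype.card V)⌋₊ + 1)) :=
    card_pos.mpr (nonempty_iff_ne_empty.mpr hne)
  have := le_three_mul_log_of_three_pow_le
    ((Nat.le_mul_of_pos_right _ hcard).trans (hG.three_pow_mul_card_peel_le _))
  push_cast at this
  linarith [Nat.lt_floor_add_one (3 * log (Fintype.card V))]

-- For acyclic `G` the set is bounded (`exists_peel_eq_empty`), so `sSup` is its maximum: the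
-- last round that `v` survives, not a junk value.
variable (G) in
noncomputable def peelLayer (v : V) : ℕ := sSup {k | v ∈ G.peel k}

theorem IsAcyclic.mem_peel_iff_le_peelLayer (hG : G.IsAcyclic) {v : V} {k : ℕ} :
    v ∈ G.peel k ↔ k ≤ G.peelLayer v := by
  have hbdd : BddAbove {k | v ∈ G.peel k} := by
    obtain ⟨L, hL, -⟩ := hG.exists_peel_eq_empty
    refine ⟨L, fun j hj => ?_⟩
    by_contra! hlt
    simpa [hL] using G.peel_antitone hlt.le hj
  exact ⟨fun hk => le_csSup hbdd hk,
    fun hk => G.peel_antitone hk (Nat.sSup_mem ⟨0, mem_univ v⟩ hbdd)⟩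

theorem IsAcyclic.card_filter_peelLayer_le_le_two (hG : G.IsAcyclic) (v : V) :
    #{u ∈ G.neighborFinset v | G.peelLayer v ≤ G.peelLayer u} ≤ 2 := by
  have hfilter : {u ∈ G.neighborFinset v | G.peelLayer v ≤ G.peelLayer u} =
      G.neighborFinset v ∩ G.peel (G.peelLayer v) := by
    ext u
    rw [mem_filter, mem_inter, hG.mem_peel_iff_le_peelLayer]
  rw [hfilter]
  refine card_neighborFinset_inter_peel_le (hG.mem_peel_iff_le_peelLayer.mpr le_rfl) fun h => ?_
  exact (G.peelLayer v).lt_succ_self.not_ge (hG.mem_peel_iff_le_peelLayer.mp h)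

end SimpleGraph

/-- Every finite tree admits a ρ-decomposition with `l = 3`: a partition of its vertex set
into layers `0, …, L-1` such that (i) every vertex has at most two neighbors in its own or
higher layers, and (ii) the subgraph induced by each layer consists of isolated vertices and
paths (every vertex has at most two same-layer neighbors, and layers of a tree are acyclic);
moreover the iterative rake-and-compress construction removes at least a `1/16` fraction of
the remaining vertices per step, so the number of layers satisfies `L ≤ 16·ln n + 1`. -/
theorem tree_rho_decomposition {V : Type*} [Fintype V] (G : SimpleGraph V)
    [DecidableRel G.Adj] (hT : G.IsTree) :
    ∃ (L : ℕ) (layer : V → ℕ),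
      (∀ v, layer v < L) ∧
      (∀ v, ((G.neighborFinset v).filter fun u => layer v ≤ layer u).card ≤ 2) ∧
      (∀ v, ((G.neighborFinset v).filter fun u => layer u = layer v).card ≤ 2) ∧
      (L : ℝ) ≤ 16 * Real.log (Fintype.card V) + 1 := by
  classical
  have hG := hT.isAcyclic
  obtain ⟨L, hL, hL_le⟩ := hG.exists_peel_eq_empty
  refine ⟨L, G.peelLayer, fun v => ?_, hG.card_filter_peelLayer_le_le_two, fun v => ?_, ?_⟩
  · by_contra! h
    simpa [hL] using hG.mem_peel_iff_le_peelLayer.mpr h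
  · refine (card_le_card ?_).trans (hG.card_filter_peelLayer_le_le_two v)
    exact monotone_filter_right _ fun u _ h => h.ge
  · linarith [Real.log_natCast_nonneg (Fintype.card V)]
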